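/- arXiv:2303.11416 — 3 statements merged into one kernel-verified Lean document; each statement's English description precedes it below -/
import Mathlib

section
/- Let G be any finite additive group of order k. Then the family consisting of two copies of O_k, (2k - 4) copies of the multiset G (each element once), and one copy of the multiset 2·G (each element of G with multiplicity 2) is a harmonious (G, {k^{2k-2}, 2k}, 2k²) strong difference family. -/
/-- The multiset of differences of a multisubset `B` of an additive group:
all differences `x - y` over ordered pairs of distinct positions of `B`. -/
def mDiffs {G : Type*} [AddGroup G] [DecidableEq G] (B : Multiset G) : Multiset G :=
  B.bind fun x => (B.erase x).map fun y => x - y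

/-!
`Δ O_k` is `0` with multiplicity `k (k - 1)`. If every element of `G` occurs `c` times in `B`,
then `x - y = g` pins down `y = -g + x`, so `ΔB` contains `0` exactly `|B| (c - 1)` times and
every `g ≠ 0` exactly `|B| c` times. Summing over the family, `0` occurs
`2k(k - 1) + 0 + 2k = 2k²` times and every `g ≠ 0` occurs `(2k - 4)k + 4k = 2k²` times.
-/

section mDiffs

variable {G : Type*} [AddGroup G] [DecidableEq G]

theorem card_mDiffs (B : Multiset G) :
    Multiset.card (mDiffs B) = Multiset.card B * (Multiset.card B - 1) := by
  have h : ∀ x ∈ B, Multiset.card ((B.erase x).map fun y => x - y) = Multiset.card B - 1 :=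
    fun x hx => by rw [Multiset.card_map, Multiset.card_erase_of_mem hx]; rfl
  rw [mDiffs, Multiset.card_bind, Function.comp_def, Multiset.map_congr rfl h, Multiset.map_const',
    Multiset.sum_replicate, smul_eq_mul]

theorem mDiffs_replicate (n : ℕ) (a : G) :
    mDiffs (Multiset.replicate n a) = Multiset.replicate (n * (n - 1)) 0 := by
  refine Multiset.eq_replicate.mpr ⟨by rw [card_mDiffs, Multiset.card_replicate], ?_⟩
  simp only [mDiffs, Multiset.mem_bind, Multiset.mem_map]
  rintro _ ⟨x, hx, y, hy, rfl⟩
  rw [Multiset.eq_of_mem_replicate hx, Multiset.eq_of_mem_replicate (Multiset.mem_of_mem_erase hy),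
    sub_self]

theorem count_mDiffs (B : Multiset G) (g : G) :
    (mDiffs B).count g = (B.map fun x => (B.erase x).count (-g + x)).sum := by
  rw [mDiffs, Multiset.count_bind]
  congr 1
  refine Multiset.map_congr rfl fun x _ => ?_
  have hg : x - (-g + x) = g := by simp [sub_eq_add_neg, ← add_assoc]
  rw [← Multiset.count_map_eq_count' (x - ·) _ sub_right_injective (-g + x), hg]

theorem count_mDiffs_of_forall_count_eq (B : Multiset G) (c : ℕ) (hB : ∀ y, B.count y = c)
    (g : G) : (mDiffs B).count g = Multiset.card B * (if g = 0 then c - 1 else c) := by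
  have h : ∀ x ∈ B, (B.erase x).count (-g + x) = if g = 0 then c - 1 else c := by
    intro x _
    split_ifs with hg
    · rw [hg, neg_zero, zero_add, Multiset.count_erase_self, hB]
    · rw [Multiset.count_erase_of_ne (by simpa using hg), hB]
  rw [count_mDiffs, Multiset.map_congr rfl h, Multiset.map_const', Multiset.sum_replicate,
    smul_eq_mul]

end mDiffs

/-- For a group `G` of order `k` (with `k ≥ 2`), the family consisting of two copies of
`O_k`, `2k - 4` copies of the multiset `G` (each element once) and one copy of the
multiset `2·G` (each element twice) is a harmonious `(G, {k^{2k-2}, 2k}, 2k²)` strong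
difference family. -/
theorem harmonious_sdf_two_k_squared {G : Type*} [AddGroup G] [Fintype G] [DecidableEq G]
    (k : ℕ) (hk : 2 ≤ k) (hcard : Fintype.card G = k) :
    (∀ g : G,
      (((Multiset.replicate 2 (Multiset.replicate k (0 : G)) +
          Multiset.replicate (2 * k - 4) (Finset.univ.val : Multiset G) +
          {(Finset.univ.val : Multiset G) + (Finset.univ.val : Multiset G)}).bind
            mDiffs).count g) = 2 * k ^ 2) ∧
    ((Multiset.replicate 2 (Multiset.replicate k (0 : G)) +
        Multiset.replicate (2 * k - 4) (Finset.univ.val : Multiset G) +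
        {(Finset.univ.val : Multiset G) + (Finset.univ.val : Multiset G)}).map
          Multiset.card).sum = 2 * k ^ 2 ∧
    ((Multiset.replicate 2 (Multiset.replicate k (0 : G)) +
        Multiset.replicate (2 * k - 4) (Finset.univ.val : Multiset G) +
        {(Finset.univ.val : Multiset G) + (Finset.univ.val : Multiset G)}).map
          Multiset.card) = Multiset.replicate (2 * k - 2) k + {2 * k} := by
  obtain ⟨m, rfl⟩ : ∃ m, k = m + 2 := ⟨k - 2, by omega⟩
  have hcardU : Multiset.card (Finset.univ.val : Multiset G) = m + 2 := hcard
  have hcount2 (y : G) : (Finset.univ.val + Finset.univ.val).count y = 2 := by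
    rw [Multiset.count_add, Multiset.count_univ]
  have h24 : 2 * (m + 2) - 4 = 2 * m := by omega
  refine ⟨fun g => ?_, ?_, ?_⟩
  · rw [Multiset.count_bind]
    simp only [Multiset.map_add, Multiset.map_replicate, Multiset.map_singleton, Multiset.sum_add,
      Multiset.sum_replicate, Multiset.sum_singleton, smul_eq_mul, mDiffs_replicate,
      Multiset.count_replicate, count_mDiffs_of_forall_count_eq _ 1 Multiset.count_univ,
      count_mDiffs_of_forall_count_eq _ 2 hcount2, Multiset.card_add, hcardU, h24,
      Nat.add_succ_sub_one, eq_comm (a := (0 : G))]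
    split_ifs <;> ring
  · simp only [Multiset.map_add, Multiset.map_replicate, Multiset.map_singleton, Multiset.sum_add,
      Multiset.sum_replicate, Multiset.sum_singleton, smul_eq_mul, Multiset.card_replicate,
      Multiset.card_add, hcardU, h24]
    ring
  · simp only [Multiset.map_add, Multiset.map_replicate, Multiset.map_singleton,
      Multiset.card_replicate, Multiset.card_add, hcardU, h24, ← Multiset.replicate_add]
    congr 2 <;> omega
end

section
/- If a harmonious SDF Σ in a finite group G admits a perfect lifting to G × F_q, then for every positive integer k it also admits a perfect lifting to G × F_{q^k}. Concretely, if L is a lifting of Σ with perfect companion S (so S·Δ_g = F_q^* for all g ∈ G and S·π(L) = F_q^*), and T is a complete system of representatives for the cosets of F_q^* in F_{q^k}^*, then L' = {L_t : L ∈ L, t ∈ T} (second coordinates multiplied by t) is a lifting of Σ to G × F_{q^k} with the same perfect companion S: S·Δ'_g = F_{q^k}^* for all g and S·π(L') = F_{q^k}^*. -/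
lemma mDiffs_map {α β : Type*} [AddGroup α] [AddGroup β] [DecidableEq α] [DecidableEq β]
    {f : α → β} (hf : Function.Injective f) (hsub : ∀ x y, f (x - y) = f x - f y)
    (B : Multiset α) : mDiffs (B.map f) = (mDiffs B).map f := by
  simp only [mDiffs, Multiset.bind_map, Multiset.map_bind, ← Multiset.map_erase f hf,
    Multiset.map_map, Function.comp_def, hsub]

section

variable {F E : Type*} [Field F] [Field E] (φ : F →+* E)

lemma count_map_mul_ringHom [Fintype F] [DecidableEq F] [DecidableEq E] (A : Multiset F)
    (hA : ∀ a, A.count a = if a = 0 then 0 else 1) {t : E} (ht : t ≠ 0) (e : E) :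
    (A.map fun a => t * φ a).count e = if ∃ f, f ≠ 0 ∧ e = t * φ f then 1 else 0 := by
  have hinj : Function.Injective fun a => t * φ a := (mul_right_injective₀ ht).comp φ.injective
  by_cases he : ∃ f, f ≠ 0 ∧ e = t * φ f
  · obtain ⟨f, hf, rfl⟩ := he
    rw [if_pos ⟨f, hf, rfl⟩, Multiset.count_map_eq_count' _ _ hinj, hA, if_neg hf]
  · rw [if_neg he, Multiset.count_eq_zero]
    intro hmem
    obtain ⟨a, ha, rfl⟩ := Multiset.mem_map.mp hmem
    have ha0 : a ≠ 0 := by rintro rfl; simp [← Multiset.count_pos, hA] at ha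
    exact he ⟨a, ha0, rfl⟩

lemma count_bind_map_mul_transversal [Fintype F] [DecidableEq F] [DecidableEq E] (A : Multiset F)
    (hA : ∀ a, A.count a = if a = 0 then 0 else 1) (T : Finset E) (hT0 : (0 : E) ∉ T)
    (hTreps : ∀ e : E, e ≠ 0 → (T.filter fun t => ∃ f, f ≠ 0 ∧ e = t * φ f).card = 1)
    (e : E) :
    (T.val.bind fun t => A.map fun a => t * φ a).count e = if e = 0 then 0 else 1 := by
  rw [Multiset.count_bind, Multiset.map_congr rfl fun t ht =>
    count_map_mul_ringHom φ A hA (ne_of_mem_of_not_mem ht hT0) e]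
  change ∑ t ∈ T, _ = _
  rw [← Finset.card_filter]
  split_ifs with he
  · subst he
    refine Finset.card_eq_zero.mpr (Finset.filter_eq_empty_iff.mpr ?_)
    rintro t ht ⟨f, hf, h0⟩
    exact mul_ne_zero (ne_of_mem_of_not_mem ht hT0) ((map_ne_zero φ).mpr hf) h0.symm
  · exact hTreps e he

lemma bind_map_mul_comm (S : Multiset F) (T : Multiset E) (X : Multiset F) :
    ((S.map φ).bind fun s => (T.bind fun t => X.map fun c => t * φ c).map fun c => s * c) =
      T.bind fun t => (S.bind fun s => X.map fun c => s * c).map fun a => t * φ a := by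
  simp only [Multiset.bind_map, Multiset.map_bind, Multiset.map_map, Function.comp_def, map_mul]
  rw [Multiset.bind_bind]
  simp only [mul_left_comm]

lemma bind_map_mul_filter_comm {G : Type*} [DecidableEq G] (S : Multiset F) (T : Multiset E)
    (D : Multiset (G × F)) (g : G) :
    ((S.map φ).bind fun s => ((T.bind fun t => D.map fun p => (p.1, t * φ p.2)).filter
      fun p => p.1 = g).map fun p => s * p.2) =
      T.bind fun t => (S.bind fun s => (D.filter fun p => p.1 = g).map fun p => s * p.2).map
        fun a => t * φ a := by
  simp only [Multiset.filter_bind, Multiset.filter_map, Multiset.bind_map, Multiset.map_bind,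
    Multiset.map_map, Function.comp_def, map_mul]
  rw [Multiset.bind_bind]
  simp only [mul_left_comm]

lemma scale_snd_injective {G : Type*} {t : E} (ht : t ≠ 0) :
    Function.Injective fun p : G × F => (p.1, t * φ p.2) :=
  Function.injective_id.prodMap ((mul_right_injective₀ ht).comp φ.injective)

lemma bind_snd_scaled_copies {G : Type*} [DecidableEq G] [DecidableEq E]
    (L : Multiset (Finset (G × F))) (T : Finset E) (hT0 : (0 : E) ∉ T) :
    ((L.bind fun B => T.val.map fun t => B.image fun p => (p.1, t * φ p.2)).bind
      fun C => C.val.map Prod.snd) =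
      T.val.bind fun t => (L.bind fun B => B.val.map Prod.snd).map fun c => t * φ c := by
  have hB : ∀ B ∈ L, ((T.val.map fun t => B.image fun p => (p.1, t * φ p.2)).bind
      fun C => C.val.map Prod.snd) = T.val.bind fun t => B.val.map fun p => t * φ p.2 :=
    fun B _ => by
      rw [Multiset.bind_map]
      refine Multiset.bind_congr fun t ht => ?_
      rw [Finset.image_val_of_injOn (scale_snd_injective φ (ne_of_mem_of_not_mem ht hT0)).injOn,
        Multiset.map_map]
      rfl
  rw [Multiset.bind_assoc, Multiset.bind_congr hB, Multiset.bind_bind]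
  simp only [Multiset.map_bind, Multiset.map_map, Function.comp_def]

variable {G : Type*} [AddGroup G] [DecidableEq G] [DecidableEq F] [DecidableEq E]

lemma mDiffs_image_scale_snd (B : Finset (G × F)) {t : E} (ht : t ≠ 0) :
    mDiffs (B.image fun p => (p.1, t * φ p.2)).val =
      (mDiffs B.val).map fun p => (p.1, t * φ p.2) := by
  have hinj := scale_snd_injective (G := G) φ ht
  rw [Finset.image_val_of_injOn hinj.injOn]
  exact mDiffs_map hinj (fun x y => by simp [mul_sub]) _

lemma bind_mDiffs_scaled_copies (L : Multiset (Finset (G × F))) (T : Finset E)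
    (hT0 : (0 : E) ∉ T) :
    ((L.bind fun B => T.val.map fun t => B.image fun p => (p.1, t * φ p.2)).bind
      fun C => mDiffs C.val) =
      T.val.bind fun t => (L.bind fun B => mDiffs B.val).map fun p => (p.1, t * φ p.2) := by
  have hB : ∀ B ∈ L, ((T.val.map fun t => B.image fun p => (p.1, t * φ p.2)).bind
      fun C => mDiffs C.val) = T.val.bind fun t => (mDiffs B.val).map fun p => (p.1, t * φ p.2) :=
    fun B _ => by
      rw [Multiset.bind_map]
      exact Multiset.bind_congr fun t ht =>
        mDiffs_image_scale_snd φ B (ne_of_mem_of_not_mem ht hT0)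
  rw [Multiset.bind_assoc, Multiset.bind_congr hB, Multiset.bind_bind]
  simp only [Multiset.map_bind]

end

theorem perfect_lifting_extends_to_field_extension_general {G F E : Type*}
    [AddGroup G] [DecidableEq G]
    [Field F] [Fintype F] [DecidableEq F]
    [Field E] [DecidableEq E] [Algebra F E]
    (L : Multiset (Finset (G × F)))
    (S : Finset F)
    (hgood : ∀ g : G, ∀ t : F,
      ((S.val.bind fun s =>
        (((L.bind fun B => mDiffs B.val).filter fun p => p.1 = g).map fun p =>
          s * p.2)).count t) = if t = 0 then 0 else 1)
    (hperfect : ∀ t : F,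
      ((S.val.bind fun s =>
        ((L.bind fun B => B.val.map Prod.snd)).map fun c => s * c).count t) =
        if t = 0 then 0 else 1)
    (T : Finset E) (hT0 : (0 : E) ∉ T)
    (hTreps : ∀ e : E, e ≠ 0 →
      (T.filter fun t => ∃ f : F, f ≠ 0 ∧ e = t * algebraMap F E f).card = 1) :
    (∀ g : G, ∀ e : E,
      (((S.image (algebraMap F E)).val.bind fun s =>
        ((((L.bind fun B => T.val.map fun t =>
            B.image fun p => (p.1, t * algebraMap F E p.2)).bind fun C =>
              mDiffs C.val).filter fun p => p.1 = g).map fun p => s * p.2)).count e) =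
        if e = 0 then 0 else 1) ∧
    (∀ e : E,
      (((S.image (algebraMap F E)).val.bind fun s =>
        (((L.bind fun B => T.val.map fun t =>
            B.image fun p => (p.1, t * algebraMap F E p.2)).bind fun C =>
              C.val.map Prod.snd)).map fun c => s * c).count e) =
        if e = 0 then 0 else 1) := by
  have hS : (S.image (algebraMap F E)).val = S.val.map (algebraMap F E) :=
    Finset.image_val_of_injOn (algebraMap F E).injective.injOn
  refine ⟨fun g e => ?_, fun e => ?_⟩
  · rw [hS, bind_mDiffs_scaled_copies _ L T hT0, bind_map_mul_filter_comm]
    exact count_bind_map_mul_transversal _ _ (hgood g) T hT0 hTreps e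
  · rw [hS, bind_snd_scaled_copies _ L T hT0, bind_map_mul_comm]
    exact count_bind_map_mul_transversal _ _ hperfect T hT0 hTreps e

/-- If a harmonious SDF admits a perfect lifting `L` to `G × F_q` with perfect
companion `S`, and `T` is a complete system of representatives for the cosets of
`F_q^*` in `F_{q^k}^*`, then `L' = {L_t : L ∈ L, t ∈ T}` (second coordinates
multiplied by `t`) is a lifting to `G × F_{q^k}` with perfect companion (the image
of) `S`: `S·Δ'_g = F_{q^k}^*` for all `g ∈ G` and `S·π(L') = F_{q^k}^*`. -/
theorem perfect_lifting_extends_to_field_extension {G F E : Type*}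
    [AddGroup G] [Fintype G] [DecidableEq G]
    [Field F] [Fintype F] [DecidableEq F]
    [Field E] [Fintype E] [DecidableEq E] [Algebra F E]
    (lam : ℕ) (Sig : Multiset (Multiset G))
    (hSDF : ∀ g : G, ((Sig.bind mDiffs).count g) = lam)
    (hharm : (Sig.map Multiset.card).sum = lam)
    (L : Multiset (Finset (G × F)))
    (hlift : L.map (fun B => B.val.map Prod.fst) = Sig)
    (S : Finset F) (hScard : S.card * lam = Fintype.card F - 1)
    (hgood : ∀ g : G, ∀ t : F,
      ((S.val.bind fun s =>
        (((L.bind fun B => mDiffs B.val).filter fun p => p.1 = g).map fun p =>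
          s * p.2)).count t) = if t = 0 then 0 else 1)
    (hperfect : ∀ t : F,
      ((S.val.bind fun s =>
        ((L.bind fun B => B.val.map Prod.snd)).map fun c => s * c).count t) =
        if t = 0 then 0 else 1)
    (T : Finset E) (hT0 : (0 : E) ∉ T)
    (hTreps : ∀ e : E, e ≠ 0 →
      (T.filter fun t => ∃ f : F, f ≠ 0 ∧ e = t * algebraMap F E f).card = 1) :
    (∀ g : G, ∀ e : E,
      (((S.image (algebraMap F E)).val.bind fun s =>
        ((((L.bind fun B => T.val.map fun t =>
            B.image fun p => (p.1, t * algebraMap F E p.2)).bind fun C =>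
              mDiffs C.val).filter fun p => p.1 = g).map fun p => s * p.2)).count e) =
        if e = 0 then 0 else 1) ∧
    (∀ e : E,
      (((S.image (algebraMap F E)).val.bind fun s =>
        (((L.bind fun B => T.val.map fun t =>
            B.image fun p => (p.1, t * algebraMap F E p.2)).bind fun C =>
              C.val.map Prod.snd)).map fun c => s * c).count e) =
        if e = 0 then 0 else 1) :=
  perfect_lifting_extends_to_field_extension_general L S hgood hperfect T hT0 hTreps
end

section
/- For every finite subset K of the positive integers with |K| ≥ 2, there exists an integer λ and a harmonious (G, K', λ) strong difference family Σ, where G is any group of order min(K) and the underlying set of K' ∪ {min(K)} equals K. -/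
/-!
Let `m = |G| = min K`. For each other `k = m + d ∈ K`, a harmonious family with block sizes `k`
and `m` is built from blocks of three kinds (`d` zeros together with all of `G`, `k` zeros, and
`G` itself), whose difference counts are constant on `G \ {0}`; their multiplicities are chosen
to make the count at `0`, the count elsewhere and the total block size agree. The union of these
families over `k ∈ K \ {m}` is again harmonious, and together with `m` its block sizes are
exactly `K`.
-/

open Multiset

section Differences

variable {G : Type*} [AddGroup G] [DecidableEq G]

def IsHarmoniousSDF (Sig : Multiset (Multiset G)) (lam : ℕ) : Prop :=
  (∀ g : G, (Sig.bind mDiffs).count g = lam) ∧ (Sig.map card).sum = lam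

theorem IsHarmoniousSDF.bind {ι : Type*} (s : Multiset ι) {F : ι → Multiset (Multiset G)}
    {lam : ι → ℕ} (h : ∀ i ∈ s, IsHarmoniousSDF (F i) (lam i)) :
    IsHarmoniousSDF (s.bind F) (s.map lam).sum := by
  refine ⟨fun g => ?_, ?_⟩
  · rw [bind_assoc, count_bind]
    exact congrArg sum (map_congr rfl fun i hi => (h i hi).1 g)
  · rw [map_bind, sum_bind]
    exact congrArg sum (map_congr rfl fun i hi => (h i hi).2)

theorem count_mDiffs_of_ne_zero (B : Multiset G) {g : G} (hg : g ≠ 0) :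
    (mDiffs B).count g = (B.map fun x => B.count (-g + x)).sum := by
  rw [mDiffs, count_bind]
  refine congrArg sum (map_congr rfl fun x _ => ?_)
  have h := count_map_eq_count' (x - ·) (B.erase x) sub_right_injective (-g + x)
  rwa [sub_eq_add_neg, neg_add_rev, neg_neg, add_neg_cancel_left,
    count_erase_of_ne (by simpa using hg)] at h

theorem count_zero_mDiffs_add_card (B : Multiset G) :
    (mDiffs B).count 0 + card B = (B.map B.count).sum := by
  have hx : ∀ x ∈ B, ((B.erase x).map (x - ·)).count 0 + 1 = B.count x := fun x hx => by
    rw [← sub_self x, count_map_eq_count' _ _ sub_right_injective, count_erase_self]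
    have := count_pos.mpr hx
    omega
  rw [mDiffs, count_bind, ← map_congr rfl hx, sum_map_add]
  simp

theorem count_mDiffs_replicate_zero (j : ℕ) (g : G) :
    (mDiffs (replicate j (0 : G))).count g = if g = 0 then j * (j - 1) else 0 := by
  split_ifs with hg
  · have h := count_zero_mDiffs_add_card (replicate j (0 : G))
    simp only [hg, map_replicate, count_replicate_self, sum_replicate, card_replicate,
      smul_eq_mul] at h ⊢
    rcases j with _ | j
    · simp [mDiffs]
    · rw [Nat.add_sub_cancel]; linarith
  · simp [count_mDiffs_of_ne_zero _ hg, count_replicate, hg]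

variable [Fintype G]

theorem count_mDiffs_univ (g : G) :
    (mDiffs (Finset.univ.val : Multiset G)).count g = if g = 0 then 0 else Fintype.card G := by
  split_ifs with hg
  · subst hg
    simpa [count_univ] using count_zero_mDiffs_add_card (Finset.univ.val : Multiset G)
  · simp [count_mDiffs_of_ne_zero _ hg, count_univ]

theorem count_mDiffs_replicate_zero_add_univ (d : ℕ) (g : G) :
    (mDiffs (replicate d (0 : G) + Finset.univ.val)).count g
      = if g = 0 then d * (d + 1) else 2 * d + Fintype.card G := by
  have hcount (x : G) :
      (replicate d (0 : G) + Finset.univ.val).count x = (if x = 0 then d else 0) + 1 := by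
    simp [count_replicate, count_univ, eq_comm]
  split_ifs with hg
  · have h := count_zero_mDiffs_add_card (replicate d (0 : G) + Finset.univ.val)
    simpa [hcount, hg, Finset.sum_add_distrib] using h
  · simp only [count_mDiffs_of_ne_zero _ hg, hcount, neg_add_eq_zero, map_add, map_replicate,
      hg, if_false, zero_add, sum_add, sum_replicate, smul_eq_mul, mul_one, Finset.sum_map_val,
      Finset.sum_add_distrib, Finset.sum_ite_eq, Finset.mem_univ, if_true, Finset.sum_const,
      Finset.card_univ]
    ring

end Differences

section PaddedFamily

variable (G : Type*) [Zero G] [Fintype G]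

/-- With `m = |G|`, `k = m + d` and `O_j` the block of `j` zeros, the blocks `O_d + G`, `O_k`
and `G` have each nonzero element `2d + m`, `0`, `m` times and `0` exactly `d(d+1)`,
`k(k-1)`, `0` times as a difference; the multiplicities below make both totals, and the
total block size, equal to `k m d (m + 2d)`. -/
def paddedFamily (d : ℕ) : Multiset (Multiset G) :=
  replicate ((Fintype.card G + d) * Fintype.card G) (replicate d 0 + Finset.univ.val) +
  replicate (d * Fintype.card G) (replicate (Fintype.card G + d) 0) +
  replicate ((Fintype.card G + d) * (d - 1) * (Fintype.card G + 2 * d)) Finset.univ.val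

variable {G}

theorem mem_map_card_paddedFamily {d n : ℕ} (hn : n ∈ (paddedFamily G d).map card) :
    n = Fintype.card G + d ∨ n = Fintype.card G := by
  simp only [paddedFamily, map_add, map_replicate, mem_add, mem_replicate, card_add,
    card_replicate, Finset.card_val, Finset.card_univ] at hn
  omega

theorem add_mem_map_card_paddedFamily (d : ℕ) :
    Fintype.card G + d ∈ (paddedFamily G d).map card := by
  simp only [paddedFamily, map_add, map_replicate, mem_add, mem_replicate, card_add,
    card_replicate, Finset.card_val, Finset.card_univ]
  have : 0 < Fintype.card G := Fintype.card_pos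
  exact .inl (.inl ⟨by positivity, by omega⟩)

end PaddedFamily

section HarmoniousFamilies

variable {G : Type*} [AddGroup G] [DecidableEq G] [Fintype G]

theorem isHarmoniousSDF_paddedFamily {d : ℕ} (hd : 0 < d) :
    IsHarmoniousSDF (paddedFamily G d)
      ((Fintype.card G + d) * Fintype.card G * d * (Fintype.card G + 2 * d)) := by
  obtain ⟨e, rfl⟩ := Nat.exists_eq_add_one.2 hd
  refine ⟨fun g => ?_, ?_⟩
  · rw [count_bind]
    simp only [paddedFamily, map_add, map_replicate, sum_add, sum_replicate, smul_eq_mul,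
      count_mDiffs_replicate_zero_add_univ, count_mDiffs_replicate_zero, count_mDiffs_univ]
    split_ifs <;> simp only [← add_assoc, Nat.add_sub_cancel] <;> ring
  · simp only [paddedFamily, map_add, map_replicate, sum_add, sum_replicate, smul_eq_mul,
      card_add, card_replicate, Finset.card_val, Finset.card_univ, add_tsub_cancel_right]
    ring

theorem exists_isHarmoniousSDF_of_card_lt {k : ℕ} (hk : Fintype.card G < k) :
    ∃ (lam : ℕ) (Sig : Multiset (Multiset G)), IsHarmoniousSDF Sig lam ∧
      k ∈ Sig.map card ∧ ∀ n ∈ Sig.map card, n = k ∨ n = Fintype.card G := by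
  obtain ⟨d, hd, rfl⟩ : ∃ d, 0 < d ∧ k = Fintype.card G + d :=
    ⟨k - Fintype.card G, by omega, by omega⟩
  exact ⟨_, _, isHarmoniousSDF_paddedFamily hd, add_mem_map_card_paddedFamily d,
    fun n => mem_map_card_paddedFamily⟩

end HarmoniousFamilies

theorem exists_harmonious_sdf_with_prescribed_sizes_general
    (K : Finset ℕ) (hne : K.Nonempty)
    (G : Type*) [AddGroup G] [Fintype G] [DecidableEq G]
    (hG : Fintype.card G = K.min' hne) :
    ∃ (lam : ℕ) (Sig : Multiset (Multiset G)),
      (∀ g : G, ((Sig.bind mDiffs).count g) = lam) ∧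
      (Sig.map Multiset.card).sum = lam ∧
      insert (K.min' hne) (Sig.map Multiset.card).toFinset = K := by
  have hlt (k : ℕ) (hk : k ∈ K.erase (K.min' hne)) : Fintype.card G < k :=
    hG ▸ K.min'_lt_of_mem_erase_min' hne hk
  choose! lam Sig hSig hmem hsizes using
    fun k hk => exists_isHarmoniousSDF_of_card_lt (G := G) (hlt k hk)
  obtain ⟨hcount, hsum⟩ := IsHarmoniousSDF.bind _ hSig
  refine ⟨_, _, hcount, hsum, Finset.ext fun x => ?_⟩
  simp only [Finset.mem_insert, mem_toFinset, map_bind, mem_bind]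
  constructor
  · rintro (rfl | ⟨k, hk, hx⟩)
    · exact K.min'_mem hne
    · rcases hsizes k hk x hx with rfl | rfl
      · exact Finset.mem_of_mem_erase hk
      · exact hG ▸ K.min'_mem hne
  · intro hx
    by_cases hxm : x = K.min' hne
    · exact Or.inl hxm
    · have hk : x ∈ K.erase (K.min' hne) := Finset.mem_erase.2 ⟨hxm, hx⟩
      exact Or.inr ⟨x, hk, hmem x hk⟩

/-- For every finite set `K` of positive integers with at least two elements and every
group `G` of order `min K`, there exist an index `λ` and a harmonious `(G, K', λ)`
strong difference family `Σ` such that the underlying set of `K' ∪ {min K}` is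
exactly `K` (where `K'` is the multiset of block sizes of `Σ`). -/
theorem exists_harmonious_sdf_with_prescribed_sizes
    (K : Finset ℕ) (hne : K.Nonempty) (hpos : ∀ k ∈ K, 0 < k) (hcard : 2 ≤ K.card)
    (G : Type*) [AddGroup G] [Fintype G] [DecidableEq G]
    (hG : Fintype.card G = K.min' hne) :
    ∃ (lam : ℕ) (Sig : Multiset (Multiset G)),
      (∀ g : G, ((Sig.bind mDiffs).count g) = lam) ∧
      (Sig.map Multiset.card).sum = lam ∧
      insert (K.min' hne) (Sig.map Multiset.card).toFinset = K :=
  exists_harmonious_sdf_with_prescribed_sizes_general K hne G hG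
end
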